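/- Suppose the market model S ∈ 𝒮 satisfies NA(𝒫,S). Then the cone 𝒞(S) := {X ∈ L^∞_c : ∃H ∈ ℝ^d, X ≼ [HΔS]_c} is closed under 𝒫-quasi-sure convergence of sequences: if X_n ∈ 𝒞(S) converge 𝒫-q.s. to X ∈ L^∞_c, then X ∈ 𝒞(S). -/

import Mathlib

open MeasureTheory Filter Set

variable {Ω : Type*} [MeasurableSpace Ω]

/-- Quasi-sure equality with respect to a family of measures. -/
def QSEq (𝔓 : Set (Measure Ω)) (x y : Ω → ℝ) : Prop := ∀ P ∈ 𝔓, x =ᵐ[P] y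

def qsSetoid (𝔓 : Set (Measure Ω)) : Setoid (Ω → ℝ) where
  r := QSEq 𝔓
  iseqv := ⟨fun _ _ _ => EventuallyEq.refl _ _,
    fun h P hP => (h P hP).symm,
    fun h1 h2 P hP => (h1 P hP).trans (h2 P hP)⟩

/-- The robust space `L⁰_c`. -/
def L0c (𝔓 : Set (Measure Ω)) := Quotient (qsSetoid 𝔓)

def aeSetoid (Q : Measure Ω) : Setoid (Ω → ℝ) where
  r x y := x =ᵐ[Q] y
  iseqv := ⟨fun _ => EventuallyEq.refl _ _, EventuallyEq.symm, EventuallyEq.trans⟩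

/-- The space `L⁰_Q` for a single measure. -/
def L0 (Q : Measure Ω) := Quotient (aeSetoid Q)

/-- Probability measures dominated by the family `𝔓` (vanishing on `𝔓`-polar sets). -/
def Pc (𝔓 : Set (Measure Ω)) : Set (Measure Ω) :=
  {Q | IsProbabilityMeasure Q ∧ ∀ N : Set Ω, (∀ P ∈ 𝔓, P N = 0) → Q N = 0}

abbrev PcM (𝔓 : Set (Measure Ω)) := {Q : Measure Ω // Q ∈ Pc 𝔓}

theorem QSEq.aeEq {𝔓 : Set (Measure Ω)} (Q : PcM 𝔓) {x y : Ω → ℝ}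
    (h : QSEq 𝔓 x y) : x =ᵐ[Q.1] y :=
  ae_iff.2 (Q.2.2 _ fun P hP => ae_iff.1 (h P hP))

/-- The map `j_Q : L⁰_c → L⁰_Q`. -/
def jQ {𝔓 : Set (Measure Ω)} (Q : PcM 𝔓) : L0c 𝔓 → L0 Q.1 :=
  Quotient.lift (fun x => Quotient.mk (aeSetoid Q.1) x)
    (fun _ _ h => Quotient.sound (h.aeEq Q))

/-- The `𝔓`-quasi-sure order on `L⁰_c`. -/
def qsLe {𝔓 : Set (Measure Ω)} : L0c 𝔓 → L0c 𝔓 → Prop :=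
  Quotient.lift₂ (fun x y => ∀ P ∈ 𝔓, x ≤ᵐ[P] y)
    (fun _ _ _ _ ha hb => propext
      ⟨fun h P hP => ((ha P hP).symm.le.trans (h P hP)).trans (hb P hP).le,
       fun h P hP => ((ha P hP).le.trans (h P hP)).trans (hb P hP).symm.le⟩)

/-- The `Q`-a.s. order on `L⁰_c`, for `Q ∈ 𝔓_c(Ω)`. -/
def qLe {𝔓 : Set (Measure Ω)} (Q : PcM 𝔓) : L0c 𝔓 → L0c 𝔓 → Prop :=
  Quotient.lift₂ (fun x y => x ≤ᵐ[Q.1] y)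
    (fun _ _ _ _ ha hb => propext
      ⟨fun h => (((ha.aeEq Q).symm.le.trans h)).trans (hb.aeEq Q).le,
       fun h => (((ha.aeEq Q).le.trans h)).trans (hb.aeEq Q).symm.le⟩)

def L0c.add {𝔓 : Set (Measure Ω)} : L0c 𝔓 → L0c 𝔓 → L0c 𝔓 :=
  Quotient.map₂ (fun x y ω => x ω + y ω)
    (fun _ _ ha _ _ hb P hP => by filter_upwards [ha P hP, hb P hP] with ω h1 h2; simp [h1, h2])

def L0c.const (𝔓 : Set (Measure Ω)) (m : ℝ) : L0c 𝔓 := Quotient.mk (qsSetoid 𝔓) (fun _ => m)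

def L0c.smul {𝔓 : Set (Measure Ω)} (c : ℝ) : L0c 𝔓 → L0c 𝔓 :=
  Quotient.map (fun x ω => c * x ω)
    (fun _ _ ha P hP => by filter_upwards [ha P hP] with ω h1; simp [h1])

def L0c.abs {𝔓 : Set (Measure Ω)} : L0c 𝔓 → L0c 𝔓 :=
  Quotient.map (fun x ω => |x ω|)
    (fun _ _ ha P hP => by filter_upwards [ha P hP] with ω h1; simp [h1])

/-- Multiplication by the indicator of a set `A`. -/
noncomputable def L0c.mulInd {𝔓 : Set (Measure Ω)} (A : Set Ω) : L0c 𝔓 → L0c 𝔓 :=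
  Quotient.map (fun x => A.indicator x)
    (fun _ _ ha P hP => by
      filter_upwards [ha P hP] with ω h1
      by_cases h : ω ∈ A <;> simp [Set.indicator, h, h1])

/-- The class of the indicator function of `A`. -/
noncomputable def L0c.ind (𝔓 : Set (Measure Ω)) (A : Set Ω) : L0c 𝔓 :=
  Quotient.mk (qsSetoid 𝔓) (A.indicator fun _ => (1 : ℝ))

/-- The bounded elements: `L^∞_c`. -/
def Linftyc (𝔓 : Set (Measure Ω)) : Set (L0c 𝔓) :=
  {X | ∃ m : ℝ, 0 < m ∧ qsLe X.abs (L0c.const 𝔓 m)}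

/-- Expectation under `R ∈ 𝔓_c(Ω)`. -/
noncomputable def expct {𝔓 : Set (Measure Ω)} (R : PcM 𝔓) : L0c 𝔓 → ℝ :=
  Quotient.lift (fun x => MeasureTheory.integral R.1 (fun ω => x ω))
    (fun _ _ h => integral_congr_ae (h.aeEq R))

/-- `𝒬` is a reduction set for `𝒞 ⊆ 𝒳`. -/
def IsReductionSet (𝔓 : Set (Measure Ω)) (𝒳 𝒞 : Set (L0c 𝔓)) (𝒬 : Set (PcM 𝔓)) : Prop :=
  𝒬.Nonempty ∧ ∀ X ∈ 𝒳, (X ∈ 𝒞 ↔ ∀ Q ∈ 𝒬, jQ Q X ∈ jQ Q '' 𝒞)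

/-- `𝒞 ⊆ 𝒳` is `𝔓`-sensitive. -/
def PSensitive (𝔓 : Set (Measure Ω)) (𝒳 𝒞 : Set (L0c 𝔓)) : Prop :=
  𝒞 = ∅ ∨ ∀ X ∈ 𝒳, (X ∈ 𝒞 ↔ ∀ Q : PcM 𝔓, jQ Q X ∈ jQ Q '' 𝒞)

/-- A one-period market model of dimension `d`: initial prices `S0 ∈ ℝ^d` and a
bounded, measurable, nonnegative terminal price vector `S1`. -/
structure MarketModel (Ω : Type*) [MeasurableSpace Ω] (d : ℕ) where
  S0 : Fin d → ℝ
  S1 : Ω → Fin d → ℝ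
  meas : Measurable S1
  bdd : ∃ M : ℝ, ∀ ω i, |S1 ω i| ≤ M
  nonneg0 : ∀ i, 0 ≤ S0 i
  nonneg1 : ∀ ω i, 0 ≤ S1 ω i

/-- The gain `H ΔS = ∑ i, H i (S1 i − S0 i)` of a strategy `H ∈ ℝ^d`. -/
def payoff {Ω : Type*} [MeasurableSpace Ω] {d : ℕ} (S : MarketModel Ω d)
    (H : Fin d → ℝ) (ω : Ω) : ℝ :=
  ∑ i, H i * (S.S1 ω i - S.S0 i)

/-- The class `[H ΔS]_c` in `L⁰_c`. -/
def payoffC {Ω : Type*} [MeasurableSpace Ω] (𝔓 : Set (Measure Ω)) {d : ℕ}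
    (S : MarketModel Ω d) (H : Fin d → ℝ) : L0c 𝔓 :=
  Quotient.mk (qsSetoid 𝔓) (payoff S H)

/-- The robust no-arbitrage condition `NA(𝔓, S)`. -/
def NArob {Ω : Type*} [MeasurableSpace Ω] (𝔓 : Set (Measure Ω)) {d : ℕ}
    (S : MarketModel Ω d) : Prop :=
  ∀ H : Fin d → ℝ, (∀ P ∈ 𝔓, ∀ᵐ ω ∂P, 0 ≤ payoff S H ω) →
    ∀ P ∈ 𝔓, ∀ᵐ ω ∂P, payoff S H ω = 0

/-- The no-arbitrage condition `NA(P, S)` under a single probability `P`. -/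
def NAone {Ω : Type*} [MeasurableSpace Ω] (P : Measure Ω) {d : ℕ}
    (S : MarketModel Ω d) : Prop :=
  ∀ H : Fin d → ℝ, (∀ᵐ ω ∂P, 0 ≤ payoff S H ω) → ∀ᵐ ω ∂P, payoff S H ω = 0

/-- The `𝔓`-superhedging functional, valued in `[-∞,∞]`. -/
noncomputable def piE {Ω : Type*} [MeasurableSpace Ω] (𝔓 : Set (Measure Ω)) {d : ℕ}
    (S : MarketModel Ω d) (X : L0c 𝔓) : EReal :=
  sInf ((fun r : ℝ => (r : EReal)) ''
    {r : ℝ | ∃ H : Fin d → ℝ, qsLe X ((L0c.const 𝔓 r).add (payoffC 𝔓 S H))})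

/-- The superhedgeable cone `𝒞(S) ⊆ L^∞_c`. -/
def coneC {Ω : Type*} [MeasurableSpace Ω] (𝔓 : Set (Measure Ω)) {d : ℕ}
    (S : MarketModel Ω d) : Set (L0c 𝔓) :=
  {X | X ∈ Linftyc 𝔓 ∧ ∃ H : Fin d → ℝ, qsLe X (payoffC 𝔓 S H)}

/-!
Pick for each `n` a strategy `H n` of minimal norm superhedging `x n` (the set of such strategies
is closed and nonempty). If `‖H n‖ → ∞`, a limit direction `G` of `H n / ‖H n‖` along a
subsequence has `G ΔS ≥ 0` quasi-surely, hence `G ΔS = 0` by `NA(𝔓, S)`. Then `H n - ‖H n‖ G`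
superhedges `x n` as well and is shorter than `H n` for large `n` in the subsequence. So `H n`
stays bounded along a subsequence, and a cluster point of it superhedges the limit `xl`.
-/

open Topology

theorem IsClosed.exists_forall_norm_le {E : Type*} [NormedAddCommGroup E] [ProperSpace E]
    {A : Set E} (hA : IsClosed A) (hne : A.Nonempty) : ∃ v ∈ A, ∀ w ∈ A, ‖v‖ ≤ ‖w‖ := by
  obtain ⟨v, hv, hdist⟩ := hA.exists_infDist_eq_dist hne 0
  refine ⟨v, hv, fun w hw => ?_⟩
  calc ‖v‖ = Metric.infDist 0 A := by rw [hdist, dist_zero_left]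
    _ ≤ dist 0 w := Metric.infDist_le_dist_of_mem hw
    _ = ‖w‖ := dist_zero_left w

section MinimalNorm

variable {E : Type*} [NormedAddCommGroup E] [NormedSpace ℝ E]

theorem one_le_norm_inv_norm_smul_sub {v G : E} (hG : 1 ≤ ‖G‖)
    (hmin : ∀ t : ℝ, ‖v‖ ≤ ‖v - t • G‖) : 1 ≤ ‖‖v‖⁻¹ • v - G‖ := by
  rcases eq_or_ne v 0 with rfl | hv
  · simpa using hG
  have hpos : 0 < ‖v‖ := norm_pos_iff.2 hv
  have key : ‖v‖ * 1 ≤ ‖v‖ * ‖‖v‖⁻¹ • v - G‖ := by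
    calc ‖v‖ * 1 = ‖v‖ := mul_one _
      _ ≤ ‖v - ‖v‖ • G‖ := hmin ‖v‖
      _ = ‖‖v‖ • (‖v‖⁻¹ • v - G)‖ := by rw [smul_sub, smul_inv_smul₀ hpos.ne']
      _ = ‖v‖ * ‖‖v‖⁻¹ • v - G‖ := by rw [norm_smul, norm_norm]
  exact le_of_mul_le_mul_left key hpos

theorem not_tendsto_norm_atTop_of_forall_norm_le_norm_sub_smul [ProperSpace E]
    {H : ℕ → E} {N : Set E} (hmin : ∀ n, ∀ G ∈ N, ∀ t : ℝ, ‖H n‖ ≤ ‖H n - t • G‖)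
    (hdir : ∀ φ : ℕ → ℕ, StrictMono φ → Tendsto (fun k => ‖H (φ k)‖) atTop atTop →
      ∀ G, Tendsto (fun k => ‖H (φ k)‖⁻¹ • H (φ k)) atTop (𝓝 G) → G ∈ N) :
    ¬ Tendsto (fun n => ‖H n‖) atTop atTop := by
  intro hH
  have hsphere : ∀ᶠ n in atTop, ‖H n‖⁻¹ • H n ∈ Metric.sphere (0 : E) 1 :=
    (hH.eventually_gt_atTop 0).mono fun n hn => by
      rw [mem_sphere_zero_iff_norm, norm_smul, norm_inv, norm_norm, inv_mul_cancel₀ hn.ne']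
  obtain ⟨G, hG, φ, hφ, hlim⟩ :=
    (isCompact_sphere (0 : E) 1).isSeqCompact.subseq_of_frequently_in hsphere.frequently
  have hGN : G ∈ N := hdir φ hφ (hH.comp hφ.tendsto_atTop) G hlim
  obtain ⟨k, hk⟩ := (hlim.eventually (Metric.ball_mem_nhds G one_pos)).exists
  have hfar := one_le_norm_inv_norm_smul_sub (mem_sphere_zero_iff_norm.1 hG).ge (hmin (φ k) G hGN)
  exact hfar.not_gt (by simpa [dist_eq_norm] using hk)

end MinimalNorm

section Superhedging

variable {Ω : Type*} [MeasurableSpace Ω] {d : ℕ}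

theorem payoff_eq_dotProduct (S : MarketModel Ω d) (H : Fin d → ℝ) (ω : Ω) :
    payoff S H ω = H ⬝ᵥ (S.S1 ω - S.S0) := rfl

theorem continuous_payoff (S : MarketModel Ω d) (ω : Ω) :
    Continuous fun H : Fin d → ℝ => payoff S H ω :=
  continuous_id.dotProduct continuous_const

theorem payoff_sub_smul (S : MarketModel Ω d) (H G : Fin d → ℝ) (t : ℝ) (ω : Ω) :
    payoff S (H - t • G) ω = payoff S H ω - t * payoff S G ω := by
  simp only [payoff_eq_dotProduct, sub_dotProduct, smul_dotProduct, smul_eq_mul]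

theorem payoff_smul (S : MarketModel Ω d) (c : ℝ) (H : Fin d → ℝ) (ω : Ω) :
    payoff S (c • H) ω = c * payoff S H ω := by
  simp only [payoff_eq_dotProduct, smul_dotProduct, smul_eq_mul]

def superhedges (𝔓 : Set (Measure Ω)) (S : MarketModel Ω d) (f : Ω → ℝ) : Set (Fin d → ℝ) :=
  {H | ∀ P ∈ 𝔓, f ≤ᵐ[P] payoff S H}

theorem isClosed_setOf_ae_le_payoff (P : Measure Ω) (S : MarketModel Ω d) (f : Ω → ℝ) :
    IsClosed {H : Fin d → ℝ | f ≤ᵐ[P] payoff S H} := by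
  refine IsSeqClosed.isClosed fun Hs H hHs hlim => ?_
  filter_upwards [ae_all_iff.2 hHs] with ω hω
  exact ge_of_tendsto' (((continuous_payoff S ω).tendsto H).comp hlim) hω

theorem isClosed_superhedges (𝔓 : Set (Measure Ω)) (S : MarketModel Ω d) (f : Ω → ℝ) :
    IsClosed (superhedges 𝔓 S f) := by
  simp only [superhedges, ofPred_forall]
  exact isClosed_biInter fun P _ => isClosed_setOf_ae_le_payoff P S f

theorem sub_smul_mem_superhedges {𝔓 : Set (Measure Ω)} {S : MarketModel Ω d} {f : Ω → ℝ}
    {H G : Fin d → ℝ} (hH : H ∈ superhedges 𝔓 S f)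
    (hG : ∀ P ∈ 𝔓, ∀ᵐ ω ∂P, payoff S G ω = 0) (t : ℝ) : H - t • G ∈ superhedges 𝔓 S f := by
  intro P hP
  filter_upwards [hH P hP, hG P hP] with ω hHω hGω
  rwa [payoff_sub_smul, hGω, mul_zero, sub_zero]

variable {P : Measure Ω} {S : MarketModel Ω d} {x : ℕ → Ω → ℝ} {xl : Ω → ℝ} {H : ℕ → Fin d → ℝ}

theorem ae_le_payoff_of_tendsto (hH : ∀ n, x n ≤ᵐ[P] payoff S (H n))
    (hx : ∀ᵐ ω ∂P, Tendsto (fun n => x n ω) atTop (𝓝 (xl ω)))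
    {φ : ℕ → ℕ} (hφ : Tendsto φ atTop atTop) {H' : Fin d → ℝ}
    (hlim : Tendsto (H ∘ φ) atTop (𝓝 H')) :
    xl ≤ᵐ[P] payoff S H' := by
  filter_upwards [hx, ae_all_iff.2 hH] with ω hxω hHω
  exact le_of_tendsto_of_tendsto' (hxω.comp hφ)
    (((continuous_payoff S ω).tendsto H').comp hlim) fun k => hHω (φ k)

theorem ae_nonneg_payoff_of_tendsto_direction (hH : ∀ n, x n ≤ᵐ[P] payoff S (H n))
    (hx : ∀ᵐ ω ∂P, Tendsto (fun n => x n ω) atTop (𝓝 (xl ω)))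
    {φ : ℕ → ℕ} (hφ : Tendsto φ atTop atTop) (hnorm : Tendsto (fun k => ‖H (φ k)‖) atTop atTop)
    {G : Fin d → ℝ} (hdir : Tendsto (fun k => ‖H (φ k)‖⁻¹ • H (φ k)) atTop (𝓝 G)) :
    ∀ᵐ ω ∂P, 0 ≤ payoff S G ω := by
  filter_upwards [hx, ae_all_iff.2 hH] with ω hxω hHω
  -- dividing `x (φ k) ≤ payoff S (H (φ k))` by `‖H (φ k)‖ → ∞` kills the left side
  have hscaled : Tendsto (fun k => ‖H (φ k)‖⁻¹ * x (φ k) ω) atTop (𝓝 0) := by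
    simpa using (tendsto_inv_atTop_zero.comp hnorm).mul (hxω.comp hφ)
  refine le_of_tendsto_of_tendsto' hscaled (((continuous_payoff S ω).tendsto G).comp hdir)
    fun k => ?_
  rw [Function.comp_apply, payoff_smul]
  exact mul_le_mul_of_nonneg_left (hHω (φ k)) (inv_nonneg.2 (norm_nonneg _))

end Superhedging

theorem coneC_closed_qs_general {Ω : Type*} [MeasurableSpace Ω]
    (𝔓 : Set (Measure Ω))
    (d : ℕ) (S : MarketModel Ω d) (hNA : NArob 𝔓 S)
    (x : ℕ → Ω → ℝ) (xl : Ω → ℝ)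
    (hmem : ∀ n, Quotient.mk (qsSetoid 𝔓) (x n) ∈ coneC 𝔓 S)
    (hlim : ∀ P ∈ 𝔓, ∀ᵐ ω ∂P, Filter.Tendsto (fun n => x n ω) Filter.atTop (nhds (xl ω)))
    (hbdd : Quotient.mk (qsSetoid 𝔓) xl ∈ Linftyc 𝔓) :
    Quotient.mk (qsSetoid 𝔓) xl ∈ coneC 𝔓 S := by
  have hne : ∀ n, (superhedges 𝔓 S (x n)).Nonempty := fun n => (hmem n).2
  choose H hHA hHmin using fun n => (isClosed_superhedges 𝔓 S (x n)).exists_forall_norm_le (hne n)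
  have hbounded : ¬ Tendsto (fun n => ‖H n‖) atTop atTop :=
    not_tendsto_norm_atTop_of_forall_norm_le_norm_sub_smul
      (N := {G | ∀ P ∈ 𝔓, ∀ᵐ ω ∂P, payoff S G ω = 0})
      (fun n _ hG t => hHmin n _ (sub_smul_mem_superhedges (hHA n) hG t))
      (fun _ hφ hnorm _ hdir => hNA _ fun P hP =>
        ae_nonneg_payoff_of_tendsto_direction (fun n => hHA n P hP) (hlim P hP)
          hφ.tendsto_atTop hnorm hdir)
  simp only [tendsto_atTop, not_forall, not_eventually, not_le] at hbounded
  obtain ⟨R, hR⟩ := hbounded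
  obtain ⟨H', -, φ, hφ, hH'⟩ := tendsto_subseq_of_frequently_bounded
    (Metric.isBounded_closedBall (x := 0) (r := R))
    (hR.mono fun n hn => mem_closedBall_zero_iff.2 hn.le)
  exact ⟨hbdd, H', fun P hP => ae_le_payoff_of_tendsto (fun n => hHA n P hP) (hlim P hP)
    hφ.tendsto_atTop hH'⟩

theorem coneC_closed_qs {Ω : Type*} [MeasurableSpace Ω]
    (𝔓 : Set (Measure Ω)) (h𝔓 : 𝔓.Nonempty) (hprob : ∀ P ∈ 𝔓, IsProbabilityMeasure P)
    (d : ℕ) (S : MarketModel Ω d) (hNA : NArob 𝔓 S)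
    (x : ℕ → Ω → ℝ) (xl : Ω → ℝ)
    (hmem : ∀ n, Quotient.mk (qsSetoid 𝔓) (x n) ∈ coneC 𝔓 S)
    (hlim : ∀ P ∈ 𝔓, ∀ᵐ ω ∂P, Filter.Tendsto (fun n => x n ω) Filter.atTop (nhds (xl ω)))
    (hbdd : Quotient.mk (qsSetoid 𝔓) xl ∈ Linftyc 𝔓) :
    Quotient.mk (qsSetoid 𝔓) xl ∈ coneC 𝔓 S :=
  coneC_closed_qs_general 𝔓 d S hNA x xl hmem hlim hbdd
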